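/- Let a_A, a_B ∈ ℝ³ be unit vectors, α, β ∈ [0, π], r_A = α·a_A, r_B = β·a_B, and let φ ∈ [0, π] be defined by cos φ = ⟨a_A, a_B⟩. Then the composed rotation exp(S(r_B)) · exp(S(r_A)) has rotation angle 2·arccos(cos(α/2)·cos(β/2) − sin(α/2)·sin(β/2)·cos φ) whenever cos(α/2)·cos(β/2) − sin(α/2)·sin(β/2)·cos φ ≥ 0, i.e. arccos((trace(exp(S(r_B))·exp(S(r_A))) − 1)/2) = 2·arccos(cos(α/2)·cos(β/2) − sin(α/2)·sin(β/2)·cos φ) under this hypothesis. -/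

import Mathlib

open Real Matrix

/-!
Since `S(a)³ = -S(a)` for a unit vector `a`, the exponential series collapses to Rodrigues'
formula `exp (t • S(a)) = 1 + sin t • S(a) + (1 - cos t) • S(a)²`. Taking the trace of the
product of two such matrices and passing to half angles gives `1 + 2 (2 q² - 1)`, where
`q = cos (α/2) cos (β/2) - sin (α/2) sin (β/2) ⟪a_A, a_B⟫` is the scalar part of the product of
the unit quaternions of the two rotations. So the rotation angle is `arccos (2 q² - 1)`, which
is `2 arccos q` as soon as `0 ≤ q` (and `q ≤ 1` always holds, by Cauchy–Schwarz).
-/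

/-- The skew-symmetric matrix associated to a vector `r ∈ ℝ³`. -/
noncomputable def skew (r : EuclideanSpace ℝ (Fin 3)) : Matrix (Fin 3) (Fin 3) ℝ :=
  !![0, -(r 2), r 1;
     r 2, 0, -(r 0);
     -(r 1), r 0, 0]

section PowThreeEqNeg

variable {A : Type*} [Ring A] [Algebra ℝ A] {K : A}

theorem pow_two_mul_add_one_of_pow_three_eq_neg (hK : K ^ 3 = -K) (k : ℕ) :
    K ^ (2 * k + 1) = (-1 : ℝ) ^ k • K := by
  induction k with
  | zero => simp
  | succ k ih =>
    rw [show 2 * (k + 1) + 1 = 2 + (2 * k + 1) by ring, pow_add, ih, mul_smul_comm,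
      ← pow_succ, hK, pow_succ, mul_neg_one, neg_smul, smul_neg]

theorem pow_two_mul_add_two_of_pow_three_eq_neg (hK : K ^ 3 = -K) (k : ℕ) :
    K ^ (2 * k + 2) = (-1 : ℝ) ^ k • K ^ 2 := by
  rw [pow_succ, pow_two_mul_add_one_of_pow_three_eq_neg hK, smul_mul_assoc, ← pow_two]

variable [TopologicalSpace A] [IsTopologicalRing A] [ContinuousSMul ℝ A] [T2Space A]

theorem exp_smul_of_pow_three_eq_neg (hK : K ^ 3 = -K) (t : ℝ) :
    NormedSpace.exp (t • K) = 1 + sin t • K + (1 - cos t) • K ^ 2 := by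
  set f : ℕ → A := fun n => ((n.factorial : ℝ)⁻¹) • (t • K) ^ n
  have hodd : HasSum (fun k => f (2 * k + 1)) (sin t • K) := by
    refine ((Real.hasSum_sin t).smul_const K).congr_fun fun k => ?_
    dsimp only [f]
    rw [smul_pow, pow_two_mul_add_one_of_pow_three_eq_neg hK, smul_smul, smul_smul]
    congr 1
    ring
  have hcos_sub_one : HasSum
      (fun k : ℕ => (-1) ^ (k + 1) * t ^ (2 * (k + 1)) / (2 * (k + 1)).factorial) (cos t - 1) := by
    simpa using (hasSum_nat_add_iff' 1).mpr (Real.hasSum_cos t)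
  have hshift : HasSum (fun k => f (2 * (k + 1))) ((1 - cos t) • K ^ 2) := by
    have h := hcos_sub_one.neg.smul_const (K ^ 2)
    rw [neg_sub] at h
    refine h.congr_fun fun k => ?_
    rw [show 2 * (k + 1) = 2 * k + 2 by ring]
    dsimp only [f]
    rw [smul_pow, pow_two_mul_add_two_of_pow_three_eq_neg hK, smul_smul, smul_smul]
    congr 1
    ring
  have heven : HasSum (fun k => f (2 * k)) (1 + (1 - cos t) • K ^ 2) := by
    refine (hasSum_nat_add_iff' 1).mp ?_
    simp only [Finset.sum_range_one, f, mul_zero, pow_zero, Nat.factorial_zero, Nat.cast_one,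
      inv_one, one_smul, add_sub_cancel_left]
    exact hshift
  rw [NormedSpace.exp_eq_tsum ℝ]
  change ∑' n, f n = _
  rw [(heven.even_add_odd hodd).tsum_eq, add_right_comm]

end PowThreeEqNeg

theorem EuclideanSpace.norm_sq_fin_three (a : EuclideanSpace ℝ (Fin 3)) :
    ‖a‖ ^ 2 = a 0 ^ 2 + a 1 ^ 2 + a 2 ^ 2 := by
  rw [EuclideanSpace.real_norm_sq_eq, Fin.sum_univ_three]

theorem EuclideanSpace.inner_fin_three (a b : EuclideanSpace ℝ (Fin 3)) :
    inner ℝ a b = a 0 * b 0 + a 1 * b 1 + a 2 * b 2 := by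
  simp only [PiLp.inner_apply, RCLike.inner_apply, conj_trivial, Fin.sum_univ_three]
  ring

theorem skew_smul (c : ℝ) (a : EuclideanSpace ℝ (Fin 3)) : skew (c • a) = c • skew a := by
  ext i j
  fin_cases i <;> fin_cases j <;> simp [skew]

theorem skew_pow_three (a : EuclideanSpace ℝ (Fin 3)) : skew a ^ 3 = -(‖a‖ ^ 2 • skew a) := by
  rw [EuclideanSpace.norm_sq_fin_three, pow_succ, pow_two]
  ext i j
  fin_cases i <;> fin_cases j <;> simp [skew, Matrix.mul_apply, Fin.sum_univ_three] <;> ring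

theorem exp_smul_skew {a : EuclideanSpace ℝ (Fin 3)} (ha : ‖a‖ = 1) (t : ℝ) :
    NormedSpace.exp (t • skew a) = 1 + sin t • skew a + (1 - cos t) • skew a ^ 2 :=
  exp_smul_of_pow_three_eq_neg (by rw [skew_pow_three, ha, one_pow, one_smul]) t

theorem trace_rodrigues_mul (a b : EuclideanSpace ℝ (Fin 3)) (sA vA sB vB : ℝ) :
    trace ((1 + sB • skew b + vB • skew b ^ 2) * (1 + sA • skew a + vA • skew a ^ 2)) =
      3 - 2 * vA * ‖a‖ ^ 2 - 2 * vB * ‖b‖ ^ 2 - 2 * sA * sB * inner ℝ a b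
        + vA * vB * (inner ℝ a b ^ 2 + ‖a‖ ^ 2 * ‖b‖ ^ 2) := by
  rw [EuclideanSpace.norm_sq_fin_three, EuclideanSpace.norm_sq_fin_three,
    EuclideanSpace.inner_fin_three, pow_two, pow_two]
  simp only [skew, Fin.isValue, smul_of, smul_cons, smul_eq_mul, mul_zero, mul_neg, smul_empty,
    cons_mul, Nat.succ_eq_add_one, Nat.reduceAdd, vecMul_cons, head_cons, zero_smul, tail_cons,
    neg_smul, neg_cons, neg_zero, neg_neg, neg_empty, empty_vecMul, add_zero, add_cons, zero_add,
    empty_add_empty, empty_mul, Equiv.symm_apply_apply, trace_fin_three, Matrix.mul_apply,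
    Matrix.add_apply, of_apply, cons_val', cons_val_fin_one, cons_val_zero, Fin.sum_univ_three,
    one_apply_eq, ne_eq, zero_ne_one, not_false_eq_true, one_apply_ne, cons_val_one, one_ne_zero,
    Fin.reduceEq, cons_val]
  ring

theorem trace_exp_skew_mul_exp_skew {a b : EuclideanSpace ℝ (Fin 3)} (ha : ‖a‖ = 1)
    (hb : ‖b‖ = 1) (α β : ℝ) :
    trace (NormedSpace.exp (skew (β • b)) * NormedSpace.exp (skew (α • a))) =
      1 + 2 * (2 * (cos (α / 2) * cos (β / 2) - sin (α / 2) * sin (β / 2) * inner ℝ a b) ^ 2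
        - 1) := by
  rw [skew_smul, skew_smul, exp_smul_skew hb, exp_smul_skew ha, trace_rodrigues_mul, ha, hb]
  obtain ⟨x, rfl⟩ : ∃ x, α = 2 * x := ⟨α / 2, by ring⟩
  obtain ⟨y, rfl⟩ : ∃ y, β = 2 * y := ⟨β / 2, by ring⟩
  simp only [mul_div_cancel_left₀ _ (two_ne_zero' ℝ), sin_two_mul, cos_two_mul]
  linear_combination (4 * inner ℝ a b ^ 2 * (cos x ^ 2 - 1)) * sin_sq_add_cos_sq y
    - (4 * inner ℝ a b ^ 2 * sin y ^ 2) * sin_sq_add_cos_sq x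

theorem cos_mul_cos_sub_sin_mul_sin_mul_le_one (x y : ℝ) {c : ℝ} (hc : |c| ≤ 1) :
    cos x * cos y - sin x * sin y * c ≤ 1 := by
  have hc2 : c ^ 2 ≤ 1 := by nlinarith [abs_nonneg c, sq_abs c]
  -- `2 - 2 q ≥ (cos x - cos y)² + (sin x + c sin y)²`, using `cos² y + c² sin² y ≤ 1`.
  nlinarith [sq_nonneg (cos x - cos y), sq_nonneg (sin x + c * sin y), sin_sq_add_cos_sq x,
    sin_sq_add_cos_sq y, mul_nonneg (sub_nonneg.2 hc2) (sq_nonneg (sin y))]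

theorem arccos_two_mul_sq_sub_one {q : ℝ} (h₀ : 0 ≤ q) (h₁ : q ≤ 1) :
    arccos (2 * q ^ 2 - 1) = 2 * arccos q := by
  refine arccos_eq_of_eq_cos (mul_nonneg zero_le_two (arccos_nonneg q)) ?_ ?_
  · linarith [arccos_le_pi_div_two.2 h₀]
  · rw [cos_two_mul, cos_arccos (by linarith) h₁]

theorem angle_composed_rotation_eq_general
    (aA aB : EuclideanSpace ℝ (Fin 3)) (hA : ‖aA‖ = 1) (hB : ‖aB‖ = 1)
    (α β φ : ℝ)
    (hcosφ : Real.cos φ = (inner ℝ aA aB : ℝ))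
    (hnonneg : 0 ≤ Real.cos (α / 2) * Real.cos (β / 2)
        - Real.sin (α / 2) * Real.sin (β / 2) * Real.cos φ) :
    Real.arccos
        ((Matrix.trace (NormedSpace.exp (skew (β • aB)) * NormedSpace.exp (skew (α • aA))) - 1) / 2)
      = 2 * Real.arccos (Real.cos (α / 2) * Real.cos (β / 2)
          - Real.sin (α / 2) * Real.sin (β / 2) * Real.cos φ) := by
  have hq₁ := cos_mul_cos_sub_sin_mul_sin_mul_le_one (α / 2) (β / 2) (abs_cos_le_one φ)
  rw [trace_exp_skew_mul_exp_skew hA hB, ← hcosφ, add_sub_cancel_left,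
    mul_div_cancel_left₀ _ two_ne_zero]
  exact arccos_two_mul_sq_sub_one hnonneg hq₁

theorem angle_composed_rotation_eq
    (aA aB : EuclideanSpace ℝ (Fin 3)) (hA : ‖aA‖ = 1) (hB : ‖aB‖ = 1)
    (α β φ : ℝ) (hα : α ∈ Set.Icc 0 π) (hβ : β ∈ Set.Icc 0 π) (hφ : φ ∈ Set.Icc 0 π)
    (hcosφ : Real.cos φ = (inner ℝ aA aB : ℝ))
    (hnonneg : 0 ≤ Real.cos (α / 2) * Real.cos (β / 2)
        - Real.sin (α / 2) * Real.sin (β / 2) * Real.cos φ) :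
    Real.arccos
        ((Matrix.trace (NormedSpace.exp (skew (β • aB)) * NormedSpace.exp (skew (α • aA))) - 1) / 2)
      = 2 * Real.arccos (Real.cos (α / 2) * Real.cos (β / 2)
          - Real.sin (α / 2) * Real.sin (β / 2) * Real.cos φ) :=
  angle_composed_rotation_eq_general aA aB hA hB α β φ hcosφ hnonneg
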